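/- Every Sturmian word (an aperiodic infinite binary word with exactly m+1 factors of each length m) has exactly 2 Abelian factors of every length m ≥ 1. -/

import Mathlib

/-- The factor of the infinite word `w` of length `m` starting at position `i`. -/
def factorAt {α : Type*} (w : ℕ → α) (i m : ℕ) : List α :=
  (List.range m).map fun k => w (i + k)

/-- `u` is a (finite) factor of the infinite word `w`. -/
def IsFactor {α : Type*} (w : ℕ → α) (u : List α) : Prop :=
  ∃ i, u = factorAt w i u.length

/-- `w` is recurrent: every factor occurs infinitely often. -/
def Recurrent {α : Type*} (w : ℕ → α) : Prop :=
  ∀ u, IsFactor w u → ∀ N, ∃ i, N ≤ i ∧ u = factorAt w i u.length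

/-- The set of Abelian factors (anagram classes, i.e. multisets) of length `m` of `w`. -/
def abelianFactors {α : Type*} (w : ℕ → α) (m : ℕ) : Set (Multiset α) :=
  {s | ∃ i, s = (factorAt w i m : Multiset α)}

/-- `{a,b}` is an edge of the factor graph of `w` (loops allowed). -/
def HasEdge {α : Type*} (w : ℕ → α) (a b : α) : Prop :=
  IsFactor w [a, b] ∨ IsFactor w [b, a]

/-- The set of triples associated with the letter `a`: anagram classes of
length-3 factors of `w` whose middle letter is `a`. -/
def triples {α : Type*} (w : ℕ → α) (a : α) : Set (Multiset α) :=
  {s | ∃ x y, IsFactor w [x, a, y] ∧ s = ({x, a, y} : Multiset α)}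

/-- The edge sets of cycles of a graph with edge set `E` (loops allowed):
a cycle is either a loop or a cycle on `m ≥ 3` distinct vertices. -/
def cycleEdgeSets {V : Type*} (E : Set (Sym2 V)) : Set (Set (Sym2 V)) :=
  {C | (∃ v, s(v, v) ∈ E ∧ C = {s(v, v)}) ∨
       (∃ m : ℕ, 3 ≤ m ∧ ∃ f : ZMod m → V, Function.Injective f ∧
          (∀ k, s(f k, f (k + 1)) ∈ E) ∧ C = {e | ∃ k, e = s(f k, f (k + 1))})}

/-- The edge set of the factor graph of a word `w`. -/
def factorGraphEdges {α : Type*} (w : ℕ → α) : Set (Sym2 α) :=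
  {e | ∃ a b, e = s(a, b) ∧ HasEdge w a b}

/-!
A Sturmian word is recurrent, so the growth of its complexity by one at each length leaves exactly
one right special and one left special factor of each length. It is balanced: otherwise a
shortest pair of windows whose numbers of `1`s differ by two has the shape `0 t 0`, `1 t 1` with
`t` a palindrome. But the factors are closed under reversal, and for a palindrome `t` with `x t x`
and `y t y` factors, `x t y` is a factor too; so `0 t 1` and `1 t 0` would be factors, and both
`0 t` and `1 t` right special. Balance leaves at most two values for the number of `1`s in a
window of length `m`, aperiodicity excludes a single value, and a binary multiset is determined by
its number of `1`s.
-/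

namespace Set

variable {α β : Type*} {s r : Set α} {t : Set β} {f : α → β}

lemma ncard_add_ncard_le_of_surjOn_sdiff (hs : s.Finite) (hr : r ⊆ s) (hf : SurjOn f (s \ r) t) :
    t.ncard + r.ncard ≤ s.ncard := by
  have := (ncard_le_ncard hf (hs.sdiff.image f)).trans (ncard_image_le hs.sdiff)
  have := ncard_sdiff_add_ncard_of_subset hr hs
  omega

lemma ncard_add_one_le_of_surjOn (hs : s.Finite) (hf : SurjOn f s t) {a₁ a₂ : α}
    (h₁ : a₁ ∈ s) (h₂ : a₂ ∈ s) (hne : a₁ ≠ a₂) (heq : f a₁ = f a₂) :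
    t.ncard + 1 ≤ s.ncard := by
  have hsurj : SurjOn f (s \ {a₁}) t := by
    intro y hy
    obtain ⟨x, hx, rfl⟩ := hf hy
    by_cases hxa : x = a₁
    · exact ⟨a₂, ⟨h₂, hne.symm⟩, hxa ▸ heq.symm⟩
    · exact ⟨x, ⟨hx, hxa⟩, rfl⟩
  simpa using ncard_add_ncard_le_of_surjOn_sdiff hs (singleton_subset_iff.mpr h₁) hsurj

lemma ncard_add_two_le_of_surjOn (hs : s.Finite) (hf : SurjOn f s t) {a₁ a₂ b₁ b₂ : α}
    (ha₁ : a₁ ∈ s) (ha₂ : a₂ ∈ s) (hb₁ : b₁ ∈ s) (hb₂ : b₂ ∈ s) (ha : a₁ ≠ a₂) (hb : b₁ ≠ b₂)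
    (hfa : f a₁ = f a₂) (hfb : f b₁ = f b₂) (hab : f a₁ ≠ f b₁) :
    t.ncard + 2 ≤ s.ncard := by
  have hsurj : SurjOn f (s \ {a₁, b₁}) t := by
    intro y hy
    obtain ⟨x, hx, rfl⟩ := hf hy
    by_cases hxa : x = a₁
    · subst hxa
      exact ⟨a₂, ⟨ha₂, by rintro (h | h) <;> simp_all⟩, hfa.symm⟩
    by_cases hxb : x = b₁
    · subst hxb
      exact ⟨b₂, ⟨hb₂, by rintro (h | h) <;> simp_all⟩, hfb.symm⟩
    exact ⟨x, ⟨hx, by rintro (h | h) <;> simp_all⟩, rfl⟩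
  have := ncard_add_ncard_le_of_surjOn_sdiff hs (insert_subset ha₁ (singleton_subset_iff.mpr hb₁))
    hsurj
  rwa [ncard_pair (fun h => hab (congrArg f h))] at this

end Set

lemma Fin.two_eq_or_eq {x y : Fin 2} (h : x ≠ y) (c : Fin 2) : c = x ∨ c = y := by
  revert x y c; decide

def IsEventuallyPeriodic {α : Type*} (w : ℕ → α) : Prop :=
  ∃ p, 1 ≤ p ∧ ∃ N, ∀ i, N ≤ i → w (i + p) = w i

def factorsOfLength {α : Type*} (w : ℕ → α) (n : ℕ) : Set (List α) :=
  {u | ∃ i, u = factorAt w i n}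

section Factors

variable {α : Type*} {w : ℕ → α}

@[simp] lemma length_factorAt (w : ℕ → α) (i n : ℕ) : (factorAt w i n).length = n := by
  simp [factorAt]

@[simp] lemma getElem_factorAt (w : ℕ → α) (i n k : ℕ) (h : k < (factorAt w i n).length) :
    (factorAt w i n)[k] = w (i + k) := by
  simp [factorAt]

@[simp] lemma factorAt_zero (w : ℕ → α) (i : ℕ) : factorAt w i 0 = [] := rfl

lemma factorAt_add (w : ℕ → α) (i a b : ℕ) :
    factorAt w i (a + b) = factorAt w i a ++ factorAt w (i + a) b := by
  simp [factorAt, List.range_add, Function.comp_def, Nat.add_assoc]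

lemma factorAt_succ (w : ℕ → α) (i n : ℕ) :
    factorAt w i (n + 1) = factorAt w i n ++ [w (i + n)] := by
  simp [factorAt_add]; rfl

lemma factorAt_succ' (w : ℕ → α) (i n : ℕ) :
    factorAt w i (n + 1) = w i :: factorAt w (i + 1) n := by
  rw [Nat.add_comm, factorAt_add]; rfl

lemma factorAt_eq_factorAt_iff {i j n : ℕ} :
    factorAt w i n = factorAt w j n ↔ ∀ k < n, w (i + k) = w (j + k) := by
  simp [List.ext_getElem_iff]

lemma factorAt_add_eq_of_factorAt_eq {i j m e n : ℕ} (h : factorAt w i m = factorAt w j m)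
    (hle : e + n ≤ m) : factorAt w (i + e) n = factorAt w (j + e) n := by
  rw [factorAt_eq_factorAt_iff] at h ⊢
  intro k hk
  simpa [Nat.add_assoc] using h (e + k) (by omega)

lemma factorAt_shift (w : ℕ → α) (N i n : ℕ) :
    factorAt (fun k => w (N + k)) i n = factorAt w (N + i) n := by
  simp [factorAt, Nat.add_assoc]

lemma isFactor_factorAt (w : ℕ → α) (i n : ℕ) : IsFactor w (factorAt w i n) :=
  ⟨i, by rw [length_factorAt]⟩

lemma IsFactor.of_infix {u v : List α} (huv : u <:+: v) (hv : IsFactor w v) : IsFactor w u := by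
  obtain ⟨s, r, rfl⟩ := huv
  obtain ⟨i, hi⟩ := hv
  simp only [List.length_append, factorAt_add] at hi
  exact ⟨i + s.length, (List.append_inj (List.append_inj hi (by simp)).1 (by simp)).2⟩

lemma mem_factorsOfLength {u : List α} {n : ℕ} :
    u ∈ factorsOfLength w n ↔ IsFactor w u ∧ u.length = n := by
  constructor
  · rintro ⟨i, rfl⟩
    exact ⟨isFactor_factorAt w i n, length_factorAt w i n⟩
  · rintro ⟨⟨i, hi⟩, rfl⟩
    exact ⟨i, hi⟩

lemma factorsOfLength_zero (w : ℕ → α) : factorsOfLength w 0 = {[]} := by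
  ext u
  simp [factorsOfLength]

lemma factorsOfLength_finite [Finite α] (w : ℕ → α) (n : ℕ) : (factorsOfLength w n).Finite :=
  (List.finite_length_eq α n).subset fun _ hu => (mem_factorsOfLength.mp hu).2

lemma surjOn_dropLast_factorsOfLength (w : ℕ → α) (n : ℕ) :
    Set.SurjOn List.dropLast (factorsOfLength w (n + 1)) (factorsOfLength w n) := by
  rintro _ ⟨i, rfl⟩
  exact ⟨factorAt w i (n + 1), ⟨i, rfl⟩, by simp [factorAt_succ]⟩

lemma IsFactor.exists_append_singleton {u : List α} (hu : IsFactor w u) :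
    ∃ a, IsFactor w (u ++ [a]) := by
  obtain ⟨i, hi⟩ := hu
  refine ⟨w (i + u.length), i, ?_⟩
  rw [List.length_append, List.length_singleton, factorAt_succ, ← hi]

lemma IsFactor.exists_cons (hw : Recurrent w) {u : List α} (hu : IsFactor w u) :
    ∃ a, IsFactor w (a :: u) := by
  obtain ⟨i, hi, hu⟩ := hw u hu 1
  refine ⟨w (i - 1), i - 1, ?_⟩
  rw [List.length_cons, factorAt_succ', Nat.sub_add_cancel hi, ← hu]

lemma surjOn_tail_factorsOfLength (hw : Recurrent w) (n : ℕ) :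
    Set.SurjOn List.tail (factorsOfLength w (n + 1)) (factorsOfLength w n) := by
  intro u hu
  obtain ⟨hu, rfl⟩ := mem_factorsOfLength.mp hu
  obtain ⟨a, ha⟩ := IsFactor.exists_cons hw hu
  exact ⟨a :: u, mem_factorsOfLength.mpr ⟨ha, rfl⟩, rfl⟩

lemma isEventuallyPeriodic_of_determined [Finite α] {n : ℕ}
    (h : ∀ i j, factorAt w i n = factorAt w j n → w (i + n) = w (j + n)) :
    IsEventuallyPeriodic w := by
  obtain ⟨s₁, -, s₂, -, hne, heq⟩ := Set.infinite_univ.exists_ne_map_eq_of_mapsTo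
    (f := fun i => factorAt w i n) (fun i _ => (mem_factorsOfLength.mp ⟨i, rfl⟩).2)
    (List.finite_length_eq α n)
  wlog hlt : s₁ < s₂ generalizing s₁ s₂
  · exact this s₂ s₁ hne.symm heq.symm (by omega)
  have hshift : ∀ d, factorAt w (s₁ + d) n = factorAt w (s₂ + d) n := by
    intro d
    induction d with
    | zero => exact heq
    | succ d ih =>
      have h' := congrArg List.tail (show factorAt w (s₁ + d) (n + 1) = factorAt w (s₂ + d) (n + 1)
        by rw [factorAt_succ, factorAt_succ, ih, h _ _ ih])
      simpa [factorAt_succ', Nat.add_assoc] using h'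
  refine ⟨s₂ - s₁, by omega, s₁ + n, fun i hi => ?_⟩
  have := h _ _ (hshift (i - n - s₁))
  rw [show s₁ + (i - n - s₁) + n = i by omega,
    show s₂ + (i - n - s₁) + n = i + (s₂ - s₁) by omega] at this
  exact this.symm

/-- Morse–Hedlund. If some length had no right special factor, the windows of that length would
determine the next letter, and `w` would be eventually periodic. -/
theorem add_one_le_ncard_factorsOfLength [Finite α] (hw : ¬ IsEventuallyPeriodic w) (n : ℕ) :
    n + 1 ≤ (factorsOfLength w n).ncard := by
  induction n with
  | zero => simp [factorsOfLength_zero]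
  | succ n ih =>
    obtain ⟨i, j, hij, hne⟩ : ∃ i j, factorAt w i n = factorAt w j n ∧ w (i + n) ≠ w (j + n) := by
      by_contra! h
      exact hw (isEventuallyPeriodic_of_determined h)
    have := Set.ncard_add_one_le_of_surjOn (factorsOfLength_finite w (n + 1))
      (surjOn_dropLast_factorsOfLength w n) ⟨i, rfl⟩ ⟨j, rfl⟩
      (fun h => hne (by simpa [factorAt_succ, hij] using h)) (by simp [factorAt_succ, hij])
    omega

end Factors

section SpecialFactors

variable {α : Type*} {w : ℕ → α}

def IsRightSpecial (w : ℕ → α) (u : List α) : Prop :=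
  ∃ a b, a ≠ b ∧ IsFactor w (u ++ [a]) ∧ IsFactor w (u ++ [b])

def IsLeftSpecial (w : ℕ → α) (u : List α) : Prop :=
  ∃ a b, a ≠ b ∧ IsFactor w (a :: u) ∧ IsFactor w (b :: u)

lemma eq_of_not_isRightSpecial {u : List α} (hu : ¬ IsRightSpecial w u) {a b : α}
    (ha : IsFactor w (u ++ [a])) (hb : IsFactor w (u ++ [b])) : a = b := by
  by_contra hab
  exact hu ⟨a, b, hab, ha, hb⟩

lemma eq_of_not_isLeftSpecial {u : List α} (hu : ¬ IsLeftSpecial w u) {a b : α}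
    (ha : IsFactor w (a :: u)) (hb : IsFactor w (b :: u)) : a = b := by
  by_contra hab
  exact hu ⟨a, b, hab, ha, hb⟩

lemma eq_of_factorAt_eq_of_not_isRightSpecial {i j n : ℕ} (h : factorAt w i n = factorAt w j n)
    (hns : ¬ IsRightSpecial w (factorAt w i n)) : w (i + n) = w (j + n) := by
  refine eq_of_not_isRightSpecial hns ?_ ?_
  · rw [← factorAt_succ]; exact isFactor_factorAt w i (n + 1)
  · rw [h, ← factorAt_succ]; exact isFactor_factorAt w j (n + 1)

lemma eq_of_factorAt_eq_of_not_isLeftSpecial {i j n : ℕ}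
    (h : factorAt w (i + 1) n = factorAt w (j + 1) n)
    (hns : ¬ IsLeftSpecial w (factorAt w (i + 1) n)) : w i = w j := by
  refine eq_of_not_isLeftSpecial hns ?_ ?_
  · rw [← factorAt_succ']; exact isFactor_factorAt w i (n + 1)
  · rw [h, ← factorAt_succ']; exact isFactor_factorAt w j (n + 1)

lemma isFactor_cons_append_of_not_bispecial (hw : Recurrent w)
    {z : List α} {x y : α} (hz : ¬ (IsRightSpecial w z ∧ IsLeftSpecial w z))
    (hxz : IsFactor w (x :: z)) (hzy : IsFactor w (z ++ [y])) : IsFactor w (x :: (z ++ [y])) := by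
  by_cases hR : IsRightSpecial w z
  · obtain ⟨c, hc⟩ := hzy.exists_cons hw
    have hcz : IsFactor w (c :: z) := hc.of_infix ⟨[], [y], by simp⟩
    rwa [eq_of_not_isLeftSpecial (fun hL => hz ⟨hR, hL⟩) hcz hxz] at hc
  · obtain ⟨c, hc⟩ := hxz.exists_append_singleton
    rw [eq_of_not_isRightSpecial hR (hc.of_infix (u := z ++ [c]) ⟨[x], [], by simp⟩) hzy] at hc
    simpa using hc

end SpecialFactors

lemma IsRightSpecial.isFactor_append_singleton {w : ℕ → Fin 2} {u : List (Fin 2)}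
    (h : IsRightSpecial w u) (y : Fin 2) : IsFactor w (u ++ [y]) := by
  obtain ⟨a, b, hab, ha, hb⟩ := h
  rcases Fin.two_eq_or_eq hab y with rfl | rfl <;> assumption

lemma IsLeftSpecial.isFactor_cons {w : ℕ → Fin 2} {u : List (Fin 2)}
    (h : IsLeftSpecial w u) (y : Fin 2) : IsFactor w (y :: u) := by
  obtain ⟨a, b, hab, ha, hb⟩ := h
  rcases Fin.two_eq_or_eq hab y with rfl | rfl <;> assumption

structure IsSturmian (w : ℕ → Fin 2) : Prop where
  not_isEventuallyPeriodic : ¬ IsEventuallyPeriodic w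
  ncard_factorsOfLength_of_pos : ∀ m, 1 ≤ m → (factorsOfLength w m).ncard = m + 1

namespace IsSturmian

variable {w : ℕ → Fin 2}

lemma ncard_factorsOfLength (hw : IsSturmian w) (n : ℕ) :
    (factorsOfLength w n).ncard = n + 1 := by
  rcases n with _ | n
  · simp [factorsOfLength_zero]
  · exact hw.ncard_factorsOfLength_of_pos _ (by omega)

/-- A factor missing from a tail of `w` would leave that tail with at most `n` factors of
length `n`, contradicting Morse–Hedlund. -/
theorem recurrent (hw : IsSturmian w) : Recurrent w := by
  intro u hu N
  by_contra! hN
  have hv : ¬ IsEventuallyPeriodic (fun k => w (N + k)) := by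
    rintro ⟨p, hp, M, hM⟩
    refine hw.not_isEventuallyPeriodic ⟨p, hp, N + M, fun i hi => ?_⟩
    have : w (N + (i - N + p)) = w (N + (i - N)) := hM (i - N) (by omega)
    rwa [show N + (i - N + p) = i + p by omega, show N + (i - N) = i by omega] at this
  have hsub : factorsOfLength (fun k => w (N + k)) u.length ⊆ factorsOfLength w u.length \ {u} := by
    rintro _ ⟨i, rfl⟩
    rw [factorAt_shift]
    exact ⟨⟨N + i, rfl⟩, fun h => hN (N + i) (by omega) h.symm⟩
  have h₁ := Set.ncard_le_ncard hsub (factorsOfLength_finite w _).sdiff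
  rw [Set.ncard_sdiff_singleton_of_mem (mem_factorsOfLength.mpr ⟨hu, rfl⟩),
    hw.ncard_factorsOfLength] at h₁
  have h₂ := add_one_le_ncard_factorsOfLength hv u.length
  omega

theorem eq_of_isRightSpecial (hw : IsSturmian w) {u v : List (Fin 2)} (hu : IsRightSpecial w u)
    (hv : IsRightSpecial w v) (huv : u.length = v.length) : u = v := by
  by_contra hne
  obtain ⟨a, b, hab, hua, hub⟩ := hu
  obtain ⟨c, d, hcd, hvc, hvd⟩ := hv
  have := Set.ncard_add_two_le_of_surjOn (factorsOfLength_finite w (u.length + 1))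
    (surjOn_dropLast_factorsOfLength w u.length)
    (mem_factorsOfLength.mpr ⟨hua, by simp⟩) (mem_factorsOfLength.mpr ⟨hub, by simp⟩)
    (mem_factorsOfLength.mpr ⟨hvc, by simp [huv]⟩) (mem_factorsOfLength.mpr ⟨hvd, by simp [huv]⟩)
    (by simpa using hab) (by simpa using hcd) (by simp) (by simp) (by simpa using hne)
  rw [hw.ncard_factorsOfLength, hw.ncard_factorsOfLength] at this
  omega

theorem eq_of_isLeftSpecial (hw : IsSturmian w) {u v : List (Fin 2)} (hu : IsLeftSpecial w u)
    (hv : IsLeftSpecial w v) (huv : u.length = v.length) : u = v := by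
  by_contra hne
  obtain ⟨a, b, hab, hua, hub⟩ := hu
  obtain ⟨c, d, hcd, hvc, hvd⟩ := hv
  have := Set.ncard_add_two_le_of_surjOn (factorsOfLength_finite w (u.length + 1))
    (surjOn_tail_factorsOfLength hw.recurrent u.length)
    (mem_factorsOfLength.mpr ⟨hua, by simp⟩) (mem_factorsOfLength.mpr ⟨hub, by simp⟩)
    (mem_factorsOfLength.mpr ⟨hvc, by simp [huv]⟩) (mem_factorsOfLength.mpr ⟨hvd, by simp [huv]⟩)
    (by simpa using hab) (by simpa using hcd) rfl rfl hne
  rw [hw.ncard_factorsOfLength, hw.ncard_factorsOfLength] at this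
  omega

end IsSturmian

section Occurrences

variable {α : Type*} {w : ℕ → α} {t : List α}

def OccursAt (w : ℕ → α) (t : List α) (i : ℕ) : Prop :=
  factorAt w i t.length = t

def IsReturnTime (w : ℕ → α) (t : List α) (i d : ℕ) : Prop :=
  0 < d ∧ OccursAt w t (i + d) ∧ ∀ e, 0 < e → e < d → ¬ OccursAt w t (i + e)

lemma OccursAt.getElem {i : ℕ} (h : OccursAt w t i) {k : ℕ} (hk : k < t.length) :
    w (i + k) = t[k] := by
  simp [List.getElem_of_eq h.symm hk]

lemma occursAt_add_iff_of_factorAt_eq {i j m e : ℕ} (h : factorAt w i m = factorAt w j m)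
    (hle : e + t.length ≤ m) : OccursAt w t (i + e) ↔ OccursAt w t (j + e) := by
  rw [OccursAt, OccursAt, factorAt_add_eq_of_factorAt_eq h hle]

lemma factorAt_eq_append_singleton_iff {i : ℕ} {a : α} :
    factorAt w i (t.length + 1) = t ++ [a] ↔ OccursAt w t i ∧ w (i + t.length) = a := by
  simp [factorAt_succ, OccursAt]

lemma factorAt_eq_cons_iff {i : ℕ} {a : α} :
    factorAt w i (t.length + 1) = a :: t ↔ w i = a ∧ OccursAt w t (i + 1) := by
  rw [factorAt_succ', List.cons.injEq]; rfl

lemma factorAt_eq_cons_append_iff {i : ℕ} {a b : α} :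
    factorAt w i (t.length + 2) = a :: (t ++ [b]) ↔
      w i = a ∧ OccursAt w t (i + 1) ∧ w (i + 1 + t.length) = b := by
  rw [factorAt_succ', List.cons.injEq, factorAt_eq_append_singleton_iff]

lemma isFactor_cons_append_iff {a b : α} :
    IsFactor w (a :: (t ++ [b])) ↔
      ∃ i, w i = a ∧ OccursAt w t (i + 1) ∧ w (i + 1 + t.length) = b := by
  have hlen : (a :: (t ++ [b])).length = t.length + 2 := by simp
  simp only [IsFactor, hlen, eq_comm (a := a :: _), factorAt_eq_cons_append_iff]

lemma IsReturnTime.unique {i d d' : ℕ} (h : IsReturnTime w t i d) (h' : IsReturnTime w t i d') :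
    d = d' := by
  by_contra hne
  rcases Nat.lt_or_gt_of_ne hne with hlt | hlt
  · exact h'.2.2 d h.1 hlt h.2.1
  · exact h.2.2 d' h'.1 hlt h'.2.1

lemma exists_isReturnTime (hw : Recurrent w) (ht : IsFactor w t) (i : ℕ) :
    ∃ d, IsReturnTime w t i d := by
  classical
  have hex : ∃ d, 0 < d ∧ OccursAt w t (i + d) := by
    obtain ⟨j, hij, hj⟩ := hw t ht (i + 1)
    exact ⟨j - i, by omega, by rw [OccursAt, Nat.add_sub_cancel' (by omega), ← hj]⟩
  exact ⟨Nat.find hex, (Nat.find_spec hex).1, (Nat.find_spec hex).2,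
    fun e he hlt hocc => Nat.find_min hex hlt ⟨he, hocc⟩⟩

/-- No window of length `|t|` strictly inside a return is `t`, so none is right special and each
determines the next letter. -/
lemma IsReturnTime.of_factorAt_eq (hRS : ∀ u, IsRightSpecial w u → u.length = t.length → u = t)
    {i j d : ℕ} (hd : IsReturnTime w t i d)
    (h : factorAt w i (t.length + 1) = factorAt w j (t.length + 1)) :
    IsReturnTime w t j d ∧ factorAt w i (d + t.length) = factorAt w j (d + t.length) := by
  obtain ⟨hd₀, hocc, hfree⟩ := hd
  have hagree : ∀ m < d,
      factorAt w i (m + t.length + 1) = factorAt w j (m + t.length + 1) := by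
    intro m hm
    induction m with
    | zero => simpa using h
    | succ m ih =>
      have hwin := factorAt_add_eq_of_factorAt_eq (e := m + 1) (n := t.length) (ih (by omega))
        (by omega)
      have hlet := eq_of_factorAt_eq_of_not_isRightSpecial hwin
        fun hR => hfree (m + 1) (by omega) hm (hRS _ hR (length_factorAt ..))
      rw [show i + (m + 1) + t.length = i + (m + t.length + 1) by omega,
        show j + (m + 1) + t.length = j + (m + t.length + 1) by omega] at hlet
      rw [show m + 1 + t.length + 1 = m + t.length + 1 + 1 by omega,
        factorAt_succ w i (m + t.length + 1), factorAt_succ w j (m + t.length + 1), ih (by omega),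
        hlet]
  obtain ⟨d, rfl⟩ : ∃ d', d = d' + 1 := ⟨d - 1, by omega⟩
  have hag : factorAt w i (d + 1 + t.length) = factorAt w j (d + 1 + t.length) := by
    simpa [Nat.add_right_comm] using hagree d (by omega)
  refine ⟨⟨hd₀, (occursAt_add_iff_of_factorAt_eq hag le_rfl).mp hocc, fun e he hed hj => ?_⟩, hag⟩
  exact hfree e he hed ((occursAt_add_iff_of_factorAt_eq hag (by omega)).mpr hj)

lemma factorAt_eq_of_factorAt_add_eq
    (hLS : ∀ u, IsLeftSpecial w u → u.length = t.length → u = t) {i j s : ℕ}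
    (h : factorAt w (i + s) (t.length + 1) = factorAt w (j + s) (t.length + 1))
    (hfree : ∀ e, 0 < e → e ≤ s → ¬ OccursAt w t (i + e)) :
    factorAt w i (t.length + 1) = factorAt w j (t.length + 1) := by
  induction s with
  | zero => simpa using h
  | succ s ih =>
    refine ih ?_ fun e he hes => hfree e he (by omega)
    have hwin : factorAt w (i + s + 1) t.length = factorAt w (j + s + 1) t.length :=
      factorAt_add_eq_of_factorAt_eq (e := 0) h (by omega)
    have hlet := eq_of_factorAt_eq_of_not_isLeftSpecial hwin
      fun hL => hfree (s + 1) (by omega) le_rfl (hLS _ hL (length_factorAt ..))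
    rw [factorAt_succ', factorAt_succ', hlet, hwin]

/-- Walking back from a common window, both sides reach an occurrence of `t` after the same number
of steps. -/
lemma eq_and_factorAt_eq_of_factorAt_add_eq
    (hLS : ∀ u, IsLeftSpecial w u → u.length = t.length → u = t) {i j a s s' : ℕ}
    (hi : OccursAt w t i) (hj : OccursAt w t j) (hia : IsReturnTime w t i (a + 1))
    (hja : IsReturnTime w t j (a + 1)) (hs : s ≤ a) (hs' : s' ≤ a)
    (h : factorAt w (i + s) (t.length + 1) = factorAt w (j + s') (t.length + 1)) :
    s = s' ∧ factorAt w i (t.length + 1) = factorAt w j (t.length + 1) := by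
  wlog hle : s ≤ s' generalizing i j s s'
  · obtain ⟨h₁, h₂⟩ := this hj hi hja hia hs' hs h.symm (by omega)
    exact ⟨h₁.symm, h₂.symm⟩
  have hwin := factorAt_eq_of_factorAt_add_eq hLS (i := i) (j := j + (s' - s)) (s := s)
    (by rwa [show j + (s' - s) + s = j + s' by omega])
    fun e he hes => hia.2.2 e he (by omega)
  have hocc : OccursAt w t (j + (s' - s)) := by
    simpa using (occursAt_add_iff_of_factorAt_eq (e := 0) hwin (by omega)).mp hi
  obtain hss | hss := Nat.eq_zero_or_pos (s' - s)
  · exact ⟨by omega, by simpa [hss] using hwin⟩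
  · exact absurd hocc (hja.2.2 _ hss (by omega))

lemma reverse_factorAt_succ_eq {i j n : ℕ}
    (hC : IsFactor w (factorAt w (i + 1) (n + 1)).reverse)
    (hns : ¬ IsLeftSpecial w (factorAt w (j + 1) n))
    (h : (factorAt w i (n + 1)).reverse = factorAt w (j + 1) (n + 1)) :
    (factorAt w (i + 1) (n + 1)).reverse = factorAt w j (n + 1) := by
  rw [factorAt_succ', List.reverse_cons, factorAt_succ] at h
  have hz := (List.append_inj' h (by simp)).1
  rw [factorAt_succ, List.reverse_append, hz] at hC ⊢
  rw [factorAt_succ']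
  simp only [List.reverse_singleton, List.singleton_append] at hC ⊢
  rw [eq_of_not_isLeftSpecial hns hC (by rw [← factorAt_succ']; exact isFactor_factorAt ..)]

/-- The next occurrence of `t` is again followed by `x`, so the same return repeats forever. -/
lemma isEventuallyPeriodic_of_isReturnTime
    (hRS : ∀ u, IsRightSpecial w u → u.length = t.length → u = t) {x : α}
    (hx : ∀ y, IsFactor w (x :: (t ++ [y])) → y = x) {p a : ℕ}
    (hp : factorAt w p (t.length + 1) = t ++ [x]) (hpa : IsReturnTime w t p (a + 1))
    (hlast : w (p + a) = x) : IsEventuallyPeriodic w := by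
  have hstep : ∀ B, factorAt w B (t.length + 1) = t ++ [x] →
      factorAt w (B + (a + 1)) (t.length + 1) = t ++ [x] ∧
        factorAt w p (a + 1 + t.length) = factorAt w B (a + 1 + t.length) := by
    intro B hB
    obtain ⟨hBa, hag⟩ := hpa.of_factorAt_eq hRS (hp.trans hB.symm)
    refine ⟨factorAt_eq_append_singleton_iff.mpr ⟨hBa.2.1, hx _ ⟨B + a, ?_⟩⟩, hag⟩
    have hBx : w (B + a) = x := by
      rw [← hlast]; exact (factorAt_eq_factorAt_iff.mp hag a (by omega)).symm
    refine (factorAt_eq_cons_append_iff.mpr ⟨hBx, hBa.2.1, ?_⟩).symm.trans ?_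
    · congr 1
    · simp
  have hall : ∀ k, factorAt w (p + k * (a + 1)) (t.length + 1) = t ++ [x] := by
    intro k
    induction k with
    | zero => simpa using hp
    | succ k ih => rw [Nat.succ_mul, ← Nat.add_assoc]; exact (hstep _ ih).1
  refine ⟨a + 1, by omega, p, fun i hi => ?_⟩
  obtain ⟨k, r, hr, rfl⟩ : ∃ k r, r < a + 1 ∧ i = p + k * (a + 1) + r :=
    ⟨_, _, Nat.mod_lt (i - p) (by omega), by rw [Nat.add_assoc, Nat.div_add_mod']; omega⟩
  have h₁ := factorAt_eq_factorAt_iff.mp (hstep _ (hall k)).2 r (by omega)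
  have h₂ := factorAt_eq_factorAt_iff.mp (hstep _ (hall (k + 1))).2 r (by omega)
  rw [show p + (k + 1) * (a + 1) + r = p + k * (a + 1) + r + (a + 1) by ring] at h₂
  rw [← h₂, h₁]

/-- Reading the return from an occurrence of `t x₀` backwards, window by window, traces the
return that ends in `x₀ t`; so the two returns have the same length. -/
lemma IsReturnTime.eq_of_palindrome
    (hLS : ∀ u, IsLeftSpecial w u → u.length = t.length → u = t)
    (hC : ∀ u, IsFactor w u → u.length = t.length + 1 → IsFactor w u.reverse)
    (ht : t.Palindrome) {x : α} {p q a b : ℕ}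
    (hp : factorAt w p (t.length + 1) = t ++ [x]) (hq : OccursAt w t q)
    (hpa : IsReturnTime w t p (a + 1)) (hqb : IsReturnTime w t q (b + 1)) (hlast : w (q + b) = x) :
    b = a := by
  have hchain : ∀ s ≤ a, s ≤ b ∧
      (factorAt w (p + s) (t.length + 1)).reverse = factorAt w (q + (b - s)) (t.length + 1) := by
    intro s hs
    induction s with
    | zero =>
      refine ⟨by omega, ?_⟩
      rw [Nat.add_zero, hp, Nat.sub_zero, eq_comm, factorAt_eq_cons_iff.mpr ⟨hlast, ?_⟩]
      · simp [ht.reverse_eq]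
      · simpa [Nat.add_assoc] using hqb.2.1
    | succ s ih =>
      obtain ⟨hsb, hrev⟩ := ih (by omega)
      have hsb' : s < b := by
        refine lt_of_le_of_ne hsb fun hsb => hpa.2.2 (s + 1) (by omega) (by omega) ?_
        have hq' : factorAt w q (t.length + 1) = t ++ [w (q + t.length)] :=
          factorAt_eq_append_singleton_iff.mpr ⟨hq, rfl⟩
        simp only [← hsb, Nat.sub_self, Nat.add_zero, hq'] at hrev
        have := congrArg List.reverse hrev
        rw [List.reverse_reverse, List.reverse_append, ht.reverse_eq] at this
        exact (factorAt_eq_cons_iff.mp (by simpa using this)).2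
      refine ⟨hsb', ?_⟩
      rw [show b - (s + 1) = b - s - 1 by omega, ← Nat.add_assoc]
      refine reverse_factorAt_succ_eq (hC _ (isFactor_factorAt ..) (length_factorAt ..))
        (fun hL => hqb.2.2 (b - s) (by omega) (by omega) ?_) ?_
      · rw [show q + (b - s - 1) + 1 = q + (b - s) by omega] at hL
        exact hLS _ hL (length_factorAt ..)
      · rwa [show q + (b - s - 1) + 1 = q + (b - s) by omega]
  obtain ⟨hab, hrev⟩ := hchain a le_rfl
  have hwin : factorAt w (p + a) (t.length + 1) = w (p + a) :: t :=
    factorAt_eq_cons_iff.mpr ⟨rfl, hpa.2.1⟩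
  rw [hwin, List.reverse_cons, ht.reverse_eq, eq_comm, factorAt_eq_append_singleton_iff] at hrev
  by_contra hne
  exact hqb.2.2 (b - a) (by omega) (by omega) hrev.1

end Occurrences

/-- Once the return from `t x₀` always ends in `x₁`, any later occurrence of `x₀ t` must close a
return from `t x₁`. -/
lemma IsReturnTime.apply_add_eq {w : ℕ → Fin 2} {t : List (Fin 2)}
    (hRS : ∀ u, IsRightSpecial w u → u.length = t.length → u = t) (hrec : Recurrent w)
    {x₀ x₁ : Fin 2} (hne : x₀ ≠ x₁)
    (hα : ∀ p a, factorAt w p (t.length + 1) = t ++ [x₀] → IsReturnTime w t p (a + 1) →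
      w (p + a) = x₁)
    (hx₀ : IsFactor w (x₀ :: t)) {q b : ℕ} (hq : factorAt w q (t.length + 1) = t ++ [x₁])
    (hqb : IsReturnTime w t q (b + 1)) : w (q + b) = x₀ := by
  classical
  refine (Fin.two_eq_or_eq hne _).resolve_right fun hb => ?_
  obtain ⟨j, hqj, hj⟩ := hrec _ hx₀ (q + 1)
  obtain ⟨hwj, hOj⟩ := factorAt_eq_cons_iff.mp hj.symm
  have hOq := (factorAt_eq_append_singleton_iff.mp hq).1
  set B := Nat.findGreatest (OccursAt w t) j
  have hOB : OccursAt w t B := Nat.findGreatest_spec (m := q) (by omega) hOq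
  have hqB : q ≤ B := Nat.le_findGreatest (by omega) hOq
  have hBj : B ≤ j := Nat.findGreatest_le j
  have hret : IsReturnTime w t B (j - B + 1) := by
    refine ⟨by omega, by rwa [show B + (j - B + 1) = j + 1 by omega], fun e he hlt hOe => ?_⟩
    have := Nat.le_findGreatest (show B + e ≤ j by omega) hOe
    omega
  refine hne (hwj.symm.trans ?_)
  rcases Fin.two_eq_or_eq hne (w (B + t.length)) with h | h
  · have := hα B (j - B) (factorAt_eq_append_singleton_iff.mpr ⟨hOB, h⟩) hret
    rwa [show B + (j - B) = j by omega] at this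
  · obtain ⟨hBret, hag⟩ :=
      hqb.of_factorAt_eq hRS (hq.trans (factorAt_eq_append_singleton_iff.mpr ⟨hOB, h⟩).symm)
    have hlen := hBret.unique hret
    have hl := factorAt_eq_factorAt_iff.mp hag b (by omega)
    rwa [show B + b = j by omega, hb, eq_comm] at hl

namespace IsSturmian

variable {w : ℕ → Fin 2}

/-- The windows of length `|t| + 1` along the two returns are `2 (a + 1)` distinct factors. -/
lemma two_mul_le_of_isReturnTime (hw : IsSturmian w) {t : List (Fin 2)}
    (hLS : ∀ u, IsLeftSpecial w u → u.length = t.length → u = t) {x₀ x₁ : Fin 2} (hne : x₀ ≠ x₁)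
    {p q a : ℕ} (hp : factorAt w p (t.length + 1) = t ++ [x₀])
    (hq : factorAt w q (t.length + 1) = t ++ [x₁]) (hpa : IsReturnTime w t p (a + 1))
    (hqa : IsReturnTime w t q (a + 1)) :
    2 * (a + 1) ≤ t.length + 2 := by
  have hOp := (factorAt_eq_append_singleton_iff.mp hp).1
  have hOq := (factorAt_eq_append_singleton_iff.mp hq).1
  have hpq : factorAt w p (t.length + 1) ≠ factorAt w q (t.length + 1) := by
    rw [hp, hq]; simpa using hne
  let f : ℕ → List (Fin 2) := fun k => if k ≤ a then factorAt w (p + k) (t.length + 1)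
    else factorAt w (q + (k - (a + 1))) (t.length + 1)
  have hinj : Set.InjOn f (Finset.range (2 * (a + 1))) := by
    intro k hk k' hk' hkk'
    simp only [Finset.coe_range, Set.mem_Iio] at hk hk'
    simp only [f] at hkk'
    split_ifs at hkk' with h h' h'
    · exact (eq_and_factorAt_eq_of_factorAt_add_eq hLS hOp hOp hpa hpa h h' hkk').1
    · exact absurd (eq_and_factorAt_eq_of_factorAt_add_eq hLS hOp hOq hpa hqa h (by omega)
        hkk').2 hpq
    · exact absurd (eq_and_factorAt_eq_of_factorAt_add_eq hLS hOq hOp hqa hpa (by omega) h'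
        hkk').2 hpq.symm
    · have := (eq_and_factorAt_eq_of_factorAt_add_eq hLS hOq hOq hqa hqa (by omega) (by omega)
        hkk').1
      omega
  have hmaps : ∀ k ∈ (Finset.range (2 * (a + 1)) : Set ℕ),
      f k ∈ factorsOfLength w (t.length + 1) := by
    intro k _
    simp only [f]
    split_ifs <;> exact ⟨_, rfl⟩
  have := Set.ncard_le_ncard_of_injOn f hmaps hinj (factorsOfLength_finite w _)
  rwa [Set.ncard_coe_finset, Finset.card_range, hw.ncard_factorsOfLength] at this

/-- If `x₀ t x₁` were missing, `t` would be the bispecial factor of its length and `x₀ t` could only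
be followed by `x₀`. Then the return from `t x₀` ends in `x₁`, the return from `t x₁` ends in `x₀`,
and reading backwards shows that both returns have the same length `a + 1`. Their windows are
`2 (a + 1)` distinct factors of length `|t| + 1`, so `a + 1 ≤ |t|`, and the overlapping
occurrences of `t` force `x₀ = t[|t| - a - 1] = x₁`. -/
theorem isFactor_cons_append_of_palindrome (hw : IsSturmian w) {t : List (Fin 2)}
    (ht : t.Palindrome) (hC : ∀ u, IsFactor w u → u.length = t.length + 1 → IsFactor w u.reverse)
    {x₀ x₁ : Fin 2} (hne : x₀ ≠ x₁) (h₀ : IsFactor w (x₀ :: (t ++ [x₀])))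
    (h₁ : IsFactor w (x₁ :: (t ++ [x₁]))) : IsFactor w (x₀ :: (t ++ [x₁])) := by
  by_contra h₀₁
  have hRS : ∀ u, IsRightSpecial w u → u.length = t.length → u = t := fun u hu hl =>
    hw.eq_of_isRightSpecial hu ⟨x₀, x₁, hne, h₀.of_infix ⟨[x₀], [], by simp⟩,
      h₁.of_infix ⟨[x₁], [], by simp⟩⟩ hl
  have hLS : ∀ u, IsLeftSpecial w u → u.length = t.length → u = t := fun u hu hl =>
    hw.eq_of_isLeftSpecial hu ⟨x₀, x₁, hne, h₀.of_infix ⟨[], [x₀], by simp⟩,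
      h₁.of_infix ⟨[], [x₁], by simp⟩⟩ hl
  have hx₀ : ∀ y, IsFactor w (x₀ :: (t ++ [y])) → y = x₀ := fun y hy =>
    (Fin.two_eq_or_eq hne y).resolve_right (by rintro rfl; exact h₀₁ hy)
  obtain ⟨i₀, -, hO₀, hl₀⟩ := isFactor_cons_append_iff.mp h₀
  obtain ⟨i₁, -, hO₁, hl₁⟩ := isFactor_cons_append_iff.mp h₁
  have hp := factorAt_eq_append_singleton_iff.mpr ⟨hO₀, hl₀⟩
  have hq := factorAt_eq_append_singleton_iff.mpr ⟨hO₁, hl₁⟩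
  have htf : IsFactor w t := ⟨i₀ + 1, hO₀.symm⟩
  obtain ⟨_ | a, hpa⟩ := exists_isReturnTime hw.recurrent htf (i₀ + 1)
  · exact absurd hpa.1 (lt_irrefl 0)
  obtain ⟨_ | b, hqb⟩ := exists_isReturnTime hw.recurrent htf (i₁ + 1)
  · exact absurd hqb.1 (lt_irrefl 0)
  have hα : ∀ p a, factorAt w p (t.length + 1) = t ++ [x₀] → IsReturnTime w t p (a + 1) →
      w (p + a) = x₁ := fun p a hp hpa =>
    (Fin.two_eq_or_eq hne _).resolve_left fun h =>
      hw.not_isEventuallyPeriodic (isEventuallyPeriodic_of_isReturnTime hRS hx₀ hp hpa h)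
  have hβ := hqb.apply_add_eq hRS hw.recurrent hne hα (h₀.of_infix ⟨[], [x₀], by simp⟩) hq
  have hba : b = a := hpa.eq_of_palindrome hLS hC ht hp hO₁ hqb hβ
  rw [hba] at hqb
  have hcard := hw.two_mul_le_of_isReturnTime hLS hne hp hq hpa hqb
  have hlen : a + 1 ≤ t.length := by
    by_contra hlt
    have := hα _ _ hp hpa
    rw [show a = t.length by omega, hl₀] at this
    exact hne this
  have e₀ := hpa.2.1.getElem (k := t.length - (a + 1)) (by omega)
  have e₁ := hqb.2.1.getElem (k := t.length - (a + 1)) (by omega)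
  rw [show i₀ + 1 + (a + 1) + (t.length - (a + 1)) = i₀ + 1 + t.length by omega, hl₀] at e₀
  rw [show i₁ + 1 + (a + 1) + (t.length - (a + 1)) = i₁ + 1 + t.length by omega, hl₁] at e₁
  exact hne (e₀.trans e₁.symm)

/-- By induction on the length, the reversal of `x z y` is forced unless `z` is bispecial; then `z`
is the unique right special factor of its length, hence a palindrome, and
`isFactor_cons_append_of_palindrome` applies. -/
theorem isFactor_reverse (hw : IsSturmian w) {u : List (Fin 2)} (hu : IsFactor w u) :
    IsFactor w u.reverse := by
  suffices h : ∀ n u, u.length = n → IsFactor w u → IsFactor w u.reverse from h _ u rfl hu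
  intro n
  induction n using Nat.strong_induction_on with
  | _ n ih =>
  intro u hn hu
  have hC : ∀ v, IsFactor w v → v.length < n → IsFactor w v.reverse :=
    fun v hv hl => ih _ hl v rfl hv
  rcases u with _ | ⟨x, v⟩
  · simpa using hu
  rcases v.eq_nil_or_concat' with rfl | ⟨z, y, rfl⟩
  · simpa using hu
  simp only [List.length_cons, List.length_append] at hn
  have hxz : IsFactor w (x :: z) := hu.of_infix ⟨[], [y], by simp⟩
  have hzy : IsFactor w (z ++ [y]) := hu.of_infix ⟨[x], [], by simp⟩
  have hzx' : IsFactor w (z.reverse ++ [x]) := by simpa using hC _ hxz (by simp; omega)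
  have hyz' : IsFactor w (y :: z.reverse) := by simpa using hC _ hzy (by simp; omega)
  rw [show (x :: (z ++ [y])).reverse = y :: (z.reverse ++ [x]) by simp]
  by_cases hbis : IsRightSpecial w z.reverse ∧ IsLeftSpecial w z.reverse
  swap
  · simpa using isFactor_cons_append_of_not_bispecial hw.recurrent hbis hyz' hzx'
  obtain ⟨⟨a, b, hab, ha, hb⟩, ⟨c, d, hcd, hc, hd⟩⟩ := hbis
  have hzR : IsRightSpecial w z := ⟨c, d, hcd, by simpa using hC _ hc (by simp; omega),
    by simpa using hC _ hd (by simp; omega)⟩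
  have hzL : IsLeftSpecial w z := ⟨a, b, hab, by simpa using hC _ ha (by simp; omega),
    by simpa using hC _ hb (by simp; omega)⟩
  have hpal : z.reverse = z := hw.eq_of_isRightSpecial ⟨a, b, hab, ha, hb⟩ hzR (by simp)
  rw [hpal]
  by_cases hxy : x = y
  · subst hxy; simpa using hu
  by_contra hno
  have hyzy : IsFactor w (y :: (z ++ [y])) := by
    obtain ⟨e, he⟩ := (hzL.isFactor_cons y).exists_append_singleton
    rcases Fin.two_eq_or_eq hxy e with rfl | rfl
    · exact absurd (by simpa using he) hno
    · simpa using he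
  have hxzx : IsFactor w (x :: (z ++ [x])) := by
    obtain ⟨e, he⟩ := (hzR.isFactor_append_singleton x).exists_cons hw.recurrent
    rcases Fin.two_eq_or_eq hxy e with rfl | rfl
    · exact he
    · exact absurd he hno
  exact hno (hw.isFactor_cons_append_of_palindrome (List.Palindrome.of_reverse_eq hpal)
    (fun v hv hl => hC v hv (by omega)) (Ne.symm hxy) hyzy hxzx)

theorem false_of_palindrome_isFactor (hw : IsSturmian w) {t : List (Fin 2)} (ht : t.Palindrome)
    (h₀ : IsFactor w (0 :: (t ++ [0]))) (h₁ : IsFactor w (1 :: (t ++ [1]))) : False := by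
  have hC : ∀ u, IsFactor w u → u.length = t.length + 1 → IsFactor w u.reverse :=
    fun _ hu _ => hw.isFactor_reverse hu
  have h₀₁ := hw.isFactor_cons_append_of_palindrome ht hC (by decide) h₀ h₁
  have h₁₀ := hw.isFactor_cons_append_of_palindrome ht hC (by decide) h₁ h₀
  have := hw.eq_of_isRightSpecial (u := 0 :: t) (v := 1 :: t)
    ⟨0, 1, by decide, by simpa using h₀, by simpa using h₀₁⟩
    ⟨0, 1, by decide, by simpa using h₁₀, by simpa using h₁⟩ rfl
  simp at this

end IsSturmian

def onesCount (w : ℕ → Fin 2) (i n : ℕ) : ℕ :=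
  (factorAt w i n).count 1

lemma List.count_zero_add_count_one (l : List (Fin 2)) : l.count 0 + l.count 1 = l.length := by
  induction l with
  | nil => rfl
  | cons a l ih =>
    rcases Fin.two_eq_or_eq (show (0 : Fin 2) ≠ 1 by decide) a with rfl | rfl <;>
      simp <;> omega

section OnesCount

variable {w : ℕ → Fin 2}

lemma onesCount_add (i a b : ℕ) :
    onesCount w i (a + b) = onesCount w i a + onesCount w (i + a) b := by
  simp [onesCount, factorAt_add, List.count_append]

lemma onesCount_one (i : ℕ) : onesCount w i 1 = w i := by
  rcases Fin.two_eq_or_eq (show (0 : Fin 2) ≠ 1 by decide) (w i) with h | h <;>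
    simp [onesCount, factorAt, h]

lemma onesCount_succ (i n : ℕ) : onesCount w i (n + 1) = onesCount w i n + w (i + n) := by
  rw [onesCount_add, onesCount_one]

lemma onesCount_succ' (i n : ℕ) : onesCount w i (n + 1) = w i + onesCount w (i + 1) n := by
  rw [Nat.add_comm n, onesCount_add, onesCount_one]

lemma onesCount_add_eq_of_factorAt_eq {i j m e n : ℕ} (h : factorAt w i m = factorAt w j m)
    (hle : e + n ≤ m) : onesCount w (i + e) n = onesCount w (j + e) n := by
  rw [onesCount, onesCount, factorAt_add_eq_of_factorAt_eq h hle]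

lemma coe_factorAt_eq_coe_factorAt_iff {i j m : ℕ} :
    (factorAt w i m : Multiset (Fin 2)) = factorAt w j m ↔ onesCount w i m = onesCount w j m := by
  refine ⟨fun h => by simpa [onesCount] using congrArg (Multiset.count 1) h, fun h => ?_⟩
  rw [Multiset.coe_eq_coe, List.perm_iff_count]
  intro a
  rcases Fin.two_eq_or_eq (show (0 : Fin 2) ≠ 1 by decide) a with rfl | rfl
  · have hi := List.count_zero_add_count_one (factorAt w i m)
    have hj := List.count_zero_add_count_one (factorAt w j m)
    simp only [length_factorAt] at hi hj
    simp only [onesCount] at h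
    omega
  · exact h

/-- Strictly inside, the numbers of `1`s in prefixes of the two windows differ by exactly one. -/
lemma exists_eq_of_onesCount_add_two_le {m i j : ℕ}
    (hbal : ∀ k < m, ∀ i j, onesCount w j k ≤ onesCount w i k + 1)
    (h : onesCount w i m + 2 ≤ onesCount w j m) :
    ∃ n, m = n + 2 ∧ w i = 0 ∧ w (i + 1 + n) = 0 ∧ w j = 1 ∧ w (j + 1 + n) = 1 ∧
      factorAt w (i + 1) n = factorAt w (j + 1) n := by
  have hD : ∀ k, 0 < k → k < m → onesCount w j k = onesCount w i k + 1 := by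
    intro k hk hkm
    have h₁ := hbal k hkm i j
    have h₂ := hbal (m - k) (by omega) (i + k) (j + k)
    have e₁ := onesCount_add (w := w) i k (m - k)
    have e₂ := onesCount_add (w := w) j k (m - k)
    rw [Nat.add_sub_cancel' hkm.le] at e₁ e₂
    omega
  obtain ⟨n, rfl⟩ : ∃ n, m = n + 2 := by
    rcases m with _ | _ | n
    · simp [onesCount] at h
    · rw [onesCount_one, onesCount_one] at h
      have := (w j).isLt
      omega
    · exact ⟨n, rfl⟩
  have hfirst := hD 1 (by omega) (by omega)
  rw [onesCount_one, onesCount_one] at hfirst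
  have hlast := hD (n + 1) (by omega) (by omega)
  have hsi : onesCount w i (n + 2) = onesCount w i (n + 1) + w (i + (n + 1)) := onesCount_succ i _
  have hsj : onesCount w j (n + 2) = onesCount w j (n + 1) + w (j + (n + 1)) := onesCount_succ j _
  rw [show i + (n + 1) = i + 1 + n by omega] at hsi
  rw [show j + (n + 1) = j + 1 + n by omega] at hsj
  have := (w (i + 1 + n)).isLt
  have := (w (j + 1 + n)).isLt
  have := (w i).isLt
  have := (w j).isLt
  refine ⟨n, rfl, Fin.ext (by simp; omega), Fin.ext (by simp; omega), Fin.ext (by simp; omega),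
    Fin.ext (by simp; omega), factorAt_eq_factorAt_iff.mpr fun k hk => Fin.ext ?_⟩
  have e₁ := hD (k + 1) (by omega) (by omega)
  have e₂ := hD (k + 2) (by omega) (by omega)
  have s₁ : onesCount w i (k + 2) = onesCount w i (k + 1) + w (i + (k + 1)) := onesCount_succ i _
  have s₂ : onesCount w j (k + 2) = onesCount w j (k + 1) + w (j + (k + 1)) := onesCount_succ j _
  rw [show i + 1 + k = i + (k + 1) by omega, show j + 1 + k = j + (k + 1) by omega]
  omega

/-- Comparing the prefixes of `1 t 1` with the suffixes of `0 t 0` (and vice versa) shows that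
every prefix of `t` has as many `1`s as the suffix of the same length. -/
lemma palindrome_of_onesCount_le {n i j : ℕ}
    (hbal : ∀ k ≤ n + 1, ∀ i j, onesCount w j k ≤ onesCount w i k + 1)
    (hi₀ : w i = 0) (hi₁ : w (i + 1 + n) = 0) (hj₀ : w j = 1) (hj₁ : w (j + 1 + n) = 1)
    (hij : factorAt w (i + 1) n = factorAt w (j + 1) n) :
    (factorAt w (i + 1) n).Palindrome := by
  have hsym : ∀ l ≤ n, onesCount w (i + 1) l = onesCount w (i + 1 + (n - l)) l := by
    intro l hl
    have h₁ := hbal (l + 1) (by omega) (i + 1 + (n - l)) j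
    rw [onesCount_succ' j, onesCount_succ (i + 1 + (n - l)),
      show i + 1 + (n - l) + l = i + 1 + n by omega, hj₀, hi₁] at h₁
    have h₂ := hbal (l + 1) (by omega) i (j + 1 + (n - l))
    rw [onesCount_succ (j + 1 + (n - l)), onesCount_succ' i,
      show j + 1 + (n - l) + l = j + 1 + n by omega, hj₁, hi₀] at h₂
    have hP : onesCount w (i + 1) l = onesCount w (j + 1) l :=
      onesCount_add_eq_of_factorAt_eq (e := 0) hij (by omega)
    have hS := onesCount_add_eq_of_factorAt_eq (e := n - l) hij (n := l) (by omega)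
    simp only [Fin.val_zero, Fin.val_one] at h₁ h₂
    omega
  refine List.Palindrome.of_reverse_eq (List.ext_getElem (by simp) fun k hk _ => ?_)
  simp only [List.length_reverse, length_factorAt] at hk
  rw [List.getElem_reverse, getElem_factorAt, getElem_factorAt]
  refine Fin.ext ?_
  have e₁ := hsym k (by omega)
  have e₂ := hsym (k + 1) (by omega)
  rw [onesCount_succ, onesCount_succ',
    show i + 1 + (n - (k + 1)) + 1 = i + 1 + (n - k) by omega] at e₂
  simp only [length_factorAt]
  rw [show n - 1 - k = n - (k + 1) by omega]
  omega

end OnesCount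

theorem IsSturmian.onesCount_le_onesCount_add_one {w : ℕ → Fin 2} (hw : IsSturmian w)
    (m i j : ℕ) : onesCount w j m ≤ onesCount w i m + 1 := by
  classical
  by_contra! hlt
  have hex : ∃ m i j, onesCount w i m + 2 ≤ onesCount w j m := ⟨m, i, j, by omega⟩
  obtain ⟨i, j, hij⟩ := Nat.find_spec hex
  have hbal : ∀ k < Nat.find hex, ∀ i j, onesCount w j k ≤ onesCount w i k + 1 :=
    fun k hk i j => by
      by_contra! h
      exact Nat.find_min hex hk ⟨i, j, by omega⟩
  obtain ⟨n, hn, hi₀, hi₁, hj₀, hj₁, hmid⟩ := exists_eq_of_onesCount_add_two_le hbal hij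
  have ht := palindrome_of_onesCount_le (fun k hk => hbal k (by omega)) hi₀ hi₁ hj₀ hj₁ hmid
  refine hw.false_of_palindrome_isFactor ht (isFactor_cons_append_iff.mpr ⟨i, hi₀, ?_, ?_⟩)
    (isFactor_cons_append_iff.mpr ⟨j, hj₀, ?_, ?_⟩)
  · simp [OccursAt]
  · simpa using hi₁
  · simp [OccursAt, hmid]
  · simpa using hj₁

theorem ncard_abelianFactors_eq_two {w : ℕ → Fin 2} (hw : ¬ IsEventuallyPeriodic w) {m : ℕ}
    (hm : 1 ≤ m) (hbal : ∀ i j, onesCount w j m ≤ onesCount w i m + 1) :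
    (abelianFactors w m).ncard = 2 := by
  obtain ⟨i, j, hij⟩ : ∃ i j, onesCount w j m = onesCount w i m + 1 := by
    by_contra! hconst
    refine hw ⟨m, hm, 0, fun k _ => Fin.ext ?_⟩
    have := hbal k (k + 1)
    have := hbal (k + 1) k
    have := (w k).isLt
    have := (w (k + m)).isLt
    have := hconst k (k + 1)
    have := hconst (k + 1) k
    have e := (onesCount_succ (w := w) k m).symm.trans (onesCount_succ' k m)
    omega
  have hset : abelianFactors w m =
      {(factorAt w i m : Multiset (Fin 2)), (factorAt w j m : Multiset (Fin 2))} := by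
    ext s
    constructor
    · rintro ⟨k, rfl⟩
      have := hbal i k
      have := hbal k i
      have := hbal j k
      have := hbal k j
      rcases (show onesCount w k m = onesCount w i m ∨ onesCount w k m = onesCount w j m by omega)
        with h | h
      · exact Or.inl (coe_factorAt_eq_coe_factorAt_iff.mpr h)
      · exact Or.inr (coe_factorAt_eq_coe_factorAt_iff.mpr h)
    · rintro (rfl | rfl) <;> exact ⟨_, rfl⟩
  rw [hset, Set.ncard_pair (by rw [Ne, coe_factorAt_eq_coe_factorAt_iff]; omega)]

/-- every Sturmian word (aperiodic binary word with exactly `m + 1`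
factors of each length `m ≥ 1`) has exactly 2 Abelian factors of every length. -/
theorem stmt17 (w : ℕ → Fin 2)
    (haper : ¬ ∃ p, 1 ≤ p ∧ ∃ N, ∀ i, N ≤ i → w (i + p) = w i)
    (hcomp : ∀ m, 1 ≤ m →
      {u : List (Fin 2) | ∃ i, u = factorAt w i m}.ncard = m + 1) :
    ∀ m, 1 ≤ m → (abelianFactors w m).ncard = 2 := by
  intro m hm
  have hw : IsSturmian w := ⟨haper, hcomp⟩
  exact ncard_abelianFactors_eq_two haper hm (hw.onesCount_le_onesCount_add_one m)
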